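/- arXiv:1610.01271 — 3 statements merged into one kernel-verified Lean document; each statement's English description precedes it below -/
import Mathlib

section
/- Let T, A₁, A₂ be square-integrable real random variables and let κ be a random variable taking values in {1, 2}, all on a common probability space, such that the pair (A₁, A₂) is independent of the pair (T, κ). Suppose p_j := ℙ(κ = j) > 0 for j = 1, 2, and write m_j := E[T · 1{κ = j}]/p_j. Then Σ_{j=1}^{2} p_j · E[(A_j − T)² · 1{κ = j}]/p_j = Var(T) − p₁ p₂ (m₁ − m₂)² + Σ_{j=1}^{2} p_j · (Var(A_j) + (E[A_j] − m_j)²). -/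
/-!
On the cell `{κ = j}`, independence factors the cross terms:
`E[(A - T)² 1{κ = j}] = p_j E[A²] - 2 E[A] E[T 1{κ = j}] + E[T² 1{κ = j}]`.
Summed over the two cells, the `T²` terms give `E[T²]`; completing the squares
`(E[A_j] - m_j)²` leaves `E[T²] - p₁ m₁² - p₂ m₂²`, which differs from
`Var T = E[T²] - (p₁ m₁ + p₂ m₂)²` by the between-cell variance
`p₁ m₁² + p₂ m₂² - (p₁ m₁ + p₂ m₂)² = p₁ p₂ (m₁ - m₂)²`.
-/

open MeasureTheory ProbabilityTheory

section

variable {Ω β : Type*} [MeasurableSpace Ω] [MeasurableSpace β] {P : Measure Ω} {κ : Ω → β}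

theorem integral_mul_ite_eq_setIntegral [DecidableEq β] [MeasurableSingletonClass β]
    (hκ : Measurable κ) (f : Ω → ℝ) (j : β) :
    ∫ ω, f ω * (if κ ω = j then 1 else 0) ∂P = ∫ ω in κ ⁻¹' {j}, f ω ∂P := by
  rw [← integral_indicator (hκ (measurableSet_singleton j))]
  congr 1 with ω
  by_cases h : κ ω = j <;> simp [h]

theorem ProbabilityTheory.IndepFun.setIntegral_mul_eq_integral_mul_setIntegral {X Y : Ω → ℝ}
    (hXY : IndepFun X (fun ω => (Y ω, κ ω)) P) (hX : AEStronglyMeasurable X P)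
    (hY : AEStronglyMeasurable Y P) (hκ : Measurable κ) {s : Set β} (hs : MeasurableSet s) :
    ∫ ω in κ ⁻¹' s, X ω * Y ω ∂P = (∫ ω, X ω ∂P) * ∫ ω in κ ⁻¹' s, Y ω ∂P := by
  have hindep : IndepFun X ((κ ⁻¹' s).indicator Y) P :=
    hXY.comp (φ := id) (ψ := (Prod.snd ⁻¹' s).indicator Prod.fst) measurable_id
      (measurable_fst.indicator (measurable_snd hs))
  rw [← integral_indicator (hκ hs), ← integral_indicator (hκ hs)]
  simp_rw [Set.indicator_mul_right]
  exact hindep.integral_fun_mul_eq_mul_integral hX (hY.indicator (hκ hs))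

theorem setIntegral_sq_sub_of_indepFun [IsProbabilityMeasure P] {A T : Ω → ℝ}
    (hA : MemLp A 2 P) (hT : MemLp T 2 P) (hκ : Measurable κ)
    (hind : IndepFun A (fun ω => (T ω, κ ω)) P) {s : Set β} (hs : MeasurableSet s) :
    ∫ ω in κ ⁻¹' s, (A ω - T ω) ^ 2 ∂P
      = P.real (κ ⁻¹' s) * (variance A P + (∫ ω, A ω ∂P) ^ 2)
        - 2 * (∫ ω, A ω ∂P) * (∫ ω in κ ⁻¹' s, T ω ∂P) + ∫ ω in κ ⁻¹' s, T ω ^ 2 ∂P := by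
  have hA_sq : ∫ ω in κ ⁻¹' s, A ω ^ 2 ∂P = (∫ ω, A ω ^ 2 ∂P) * P.real (κ ⁻¹' s) := by
    have hind_sq : IndepFun (fun ω => A ω ^ 2) (fun ω => ((1 : ℝ), κ ω)) P :=
      hind.comp (φ := fun a => a ^ 2) (ψ := fun p : ℝ × β => ((1 : ℝ), p.2))
        (by fun_prop) (by fun_prop)
    simpa using hind_sq.setIntegral_mul_eq_integral_mul_setIntegral
      hA.integrable_sq.aestronglyMeasurable aestronglyMeasurable_const hκ hs
  have hAT : ∫ ω in κ ⁻¹' s, A ω * T ω ∂P = (∫ ω, A ω ∂P) * ∫ ω in κ ⁻¹' s, T ω ∂P :=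
    hind.setIntegral_mul_eq_integral_mul_setIntegral hA.aestronglyMeasurable
      hT.aestronglyMeasurable hκ hs
  have hA_sq_int : IntegrableOn (fun ω => A ω ^ 2) (κ ⁻¹' s) P := hA.integrable_sq.integrableOn
  have hAT_int : IntegrableOn (fun ω => 2 * (A ω * T ω)) (κ ⁻¹' s) P :=
    ((hA.integrable_mul hT).const_mul 2).integrableOn
  have hT_sq_int : IntegrableOn (fun ω => T ω ^ 2) (κ ⁻¹' s) P := hT.integrable_sq.integrableOn
  calc ∫ ω in κ ⁻¹' s, (A ω - T ω) ^ 2 ∂P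
      = ∫ ω in κ ⁻¹' s, A ω ^ 2 - 2 * (A ω * T ω) + T ω ^ 2 ∂P := by
        congr 1 with ω; ring
    _ = _ := by
        rw [integral_add _ hT_sq_int, integral_sub hA_sq_int hAT_int,
          integral_const_mul, hA_sq, hAT, variance_eq_sub hA]
        · simp only [Pi.pow_apply]
          ring
        · exact hA_sq_int.sub hAT_int

end

theorem mul_sq_add_mul_sq_sub_sq_of_add_eq_one {p₁ p₂ : ℝ} (hp : p₁ + p₂ = 1) (m₁ m₂ : ℝ) :
    p₁ * m₁ ^ 2 + p₂ * m₂ ^ 2 - (p₁ * m₁ + p₂ * m₂) ^ 2 = p₁ * p₂ * (m₁ - m₂) ^ 2 := by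
  linear_combination -(p₁ * m₁ ^ 2 + p₂ * m₂ ^ 2) * hp

/-- the deterministic backbone of Proposition 1: the decomposition of the
splitting error into the purity term, the heterogeneity term, and variance/bias terms. -/
theorem splitting_error_decomposition
    {Ω : Type*} [MeasurableSpace Ω] (P : Measure Ω) [IsProbabilityMeasure P]
    (T A₁ A₂ : Ω → ℝ) (κ : Ω → ℕ)
    (hT : MemLp T 2 P) (hA₁ : MemLp A₁ 2 P) (hA₂ : MemLp A₂ 2 P)
    (hκmeas : Measurable κ) (hκval : ∀ ω, κ ω = 1 ∨ κ ω = 2)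
    (hindep : IndepFun (fun ω => (A₁ ω, A₂ ω)) (fun ω => (T ω, κ ω)) P)
    (p₁ p₂ m₁ m₂ : ℝ)
    (hp₁ : p₁ = (P {ω | κ ω = 1}).toReal) (hp₂ : p₂ = (P {ω | κ ω = 2}).toReal)
    (hp₁pos : 0 < p₁) (hp₂pos : 0 < p₂)
    (hm₁ : m₁ = (∫ ω, T ω * (if κ ω = 1 then 1 else 0) ∂P) / p₁)
    (hm₂ : m₂ = (∫ ω, T ω * (if κ ω = 2 then 1 else 0) ∂P) / p₂) :
    p₁ * ((∫ ω, (A₁ ω - T ω) ^ 2 * (if κ ω = 1 then 1 else 0) ∂P) / p₁)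
        + p₂ * ((∫ ω, (A₂ ω - T ω) ^ 2 * (if κ ω = 2 then 1 else 0) ∂P) / p₂)
      = variance T P - p₁ * p₂ * (m₁ - m₂) ^ 2
        + (p₁ * (variance A₁ P + ((∫ ω, A₁ ω ∂P) - m₁) ^ 2)
          + p₂ * (variance A₂ P + ((∫ ω, A₂ ω ∂P) - m₂) ^ 2)) := by
  have hcompl : (κ ⁻¹' {1})ᶜ = κ ⁻¹' {2} := by
    ext ω; rcases hκval ω with h | h <;> simp [h]
  have hE₁ : MeasurableSet (κ ⁻¹' {1}) := hκmeas (measurableSet_singleton 1)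
  simp only [integral_mul_ite_eq_setIntegral hκmeas] at hm₁ hm₂ ⊢
  change p₁ = P.real (κ ⁻¹' {1}) at hp₁
  change p₂ = P.real (κ ⁻¹' {2}) at hp₂
  have hp : p₁ + p₂ = 1 := by rw [hp₁, hp₂, ← hcompl, probReal_add_probReal_compl hE₁]
  have hT_mean := integral_add_compl hE₁ (hT.integrable one_le_two)
  have hT_sq := integral_add_compl hE₁ hT.integrable_sq
  rw [hcompl] at hT_mean hT_sq
  rw [mul_div_cancel₀ _ hp₁pos.ne', mul_div_cancel₀ _ hp₂pos.ne',
    setIntegral_sq_sub_of_indepFun hA₁ hT hκmeas (hindep.comp measurable_fst measurable_id)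
      (measurableSet_singleton 1),
    setIntegral_sq_sub_of_indepFun hA₂ hT hκmeas (hindep.comp measurable_snd measurable_id)
      (measurableSet_singleton 2),
    ← hp₁, ← hp₂, variance_eq_sub hT, ← hT_mean]
  simp only [Pi.pow_apply, ← hT_sq]
  have hTm₁ : ∫ ω in κ ⁻¹' {1}, T ω ∂P = p₁ * m₁ := by rw [hm₁, mul_div_cancel₀ _ hp₁pos.ne']
  have hTm₂ : ∫ ω in κ ⁻¹' {2}, T ω ∂P = p₂ * m₂ := by rw [hm₂, mul_div_cancel₀ _ hp₂pos.ne']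
  rw [hTm₁, hTm₂]
  linear_combination -mul_sq_add_mul_sq_sub_sq_of_add_eq_one hp m₁ m₂
end

section
/- Let (X₁, O₁), …, (Xₙ, Oₙ) be i.i.d. random pairs with values in a product 𝒳 × 𝒪 of measurable spaces, let ψ : 𝒪 → ℝ^k be bounded measurable, and let M : 𝒳 → ℝ^k be bounded measurable with M(X₁) = E[ψ(O₁) | X₁] almost surely. Let α₁, …, αₙ : 𝒳ⁿ → [0, ∞) be measurable functions with Σᵢ αᵢ(x₁, …, xₙ) = 1 for all (x₁, …, xₙ) ∈ 𝒳ⁿ, and write αᵢ := αᵢ(X₁, …, Xₙ). Then: (i) E[Σᵢ αᵢ (ψ(Oᵢ) − M(Xᵢ))] = 0; and (ii) if V ≥ 0 satisfies E[‖ψ(O₁) − M(X₁)‖₂² | X₁] ≤ V almost surely, then E[‖Σᵢ αᵢ (ψ(Oᵢ) − M(Xᵢ))‖₂²] ≤ V. -/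
/-!
Write `Zᵢ = (Xᵢ, Oᵢ)` and `D(x, o) = ψ(o) - M(x)`. The vector `(Z₁, …, Zₙ)` has law `μ^⊗n`,
where `μ` is the law of `Z₁`, and the hypothesis on `M` says that `D` has conditional mean
zero given the covariate. Since the weights see `Zᵢ` only through `Xᵢ`, integrating out the
`i`-th coordinate first (the others held fixed) kills `E[αᵢ D(Zᵢ)]` and, for `i ≠ j`, the
cross term `E[αᵢ αⱼ ⟪D(Zᵢ), D(Zⱼ)⟫]`, while it bounds the diagonal term by `V E[αᵢ²]`.
Finally `∑ αᵢ² ≤ ∑ αᵢ = 1`.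
-/

open MeasureTheory ProbabilityTheory

namespace MeasureTheory

open Function

section IntegrateOutCoordinate

variable {ι : Type*} [Fintype ι] [DecidableEq ι] {α : ι → Type*}
  [∀ i, MeasurableSpace (α i)] (μ : ∀ i, Measure (α i)) [∀ i, SigmaFinite (μ i)] (i : ι)
  [IsProbabilityMeasure (μ i)]

theorem Measure.map_update_prod_eq_pi :
    ((Measure.pi μ).prod (μ i)).map (fun p => update p.1 i p.2) = Measure.pi μ := by
  refine (Measure.pi_eq fun s hs => ?_).symm
  have hpre : (fun p : (∀ j, α j) × α i => update p.1 i p.2) ⁻¹' Set.univ.pi s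
      = Set.univ.pi (update s i Set.univ) ×ˢ s i := by
    ext ⟨v, y⟩
    simp only [Set.mem_preimage, Set.mem_pi, Set.mem_univ, true_implies, Set.mem_prod]
    constructor
    · intro h
      refine ⟨fun j => ?_, by simpa using h i⟩
      by_cases hj : j = i
      · subst hj; simp
      · simpa [hj] using h j
    · rintro ⟨h, hy⟩ j
      by_cases hj : j = i
      · subst hj; simpa using hy
      · simpa [hj] using h j
  rw [Measure.map_apply (by fun_prop) (.univ_pi hs), hpre, Measure.prod_prod, Measure.pi_pi,
    ← Finset.prod_erase_mul _ _ (Finset.mem_univ i),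
    ← Finset.prod_erase_mul _ _ (Finset.mem_univ i)]
  simp only [update_self, measure_univ, mul_one]
  congr 1
  exact Finset.prod_congr rfl fun j hj => by rw [update_of_ne (Finset.ne_of_mem_erase hj)]

variable {E : Type*} [NormedAddCommGroup E] [NormedSpace ℝ E] {G : (∀ j, α j) → E}

theorem integral_pi_eq_integral_integral_update (hG : Integrable G (Measure.pi μ)) :
    ∫ v, G v ∂Measure.pi μ = ∫ v, ∫ y, G (update v i y) ∂μ i ∂Measure.pi μ := by
  rw [← Measure.map_update_prod_eq_pi μ i] at hG
  conv_lhs => rw [← Measure.map_update_prod_eq_pi μ i]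
  rw [integral_map (by fun_prop) hG.aestronglyMeasurable]
  exact integral_prod _ (hG.comp_measurable (by fun_prop))

theorem Integrable.integral_update (hG : Integrable G (Measure.pi μ)) :
    Integrable (fun v => ∫ y, G (update v i y) ∂μ i) (Measure.pi μ) := by
  rw [← Measure.map_update_prod_eq_pi μ i] at hG
  exact (hG.comp_measurable (by fun_prop)).integral_prod_left

end IntegrateOutCoordinate

theorem integral_smul_condExp {Ω E : Type*} {m mΩ : MeasurableSpace Ω} {P : Measure Ω}
    [IsFiniteMeasure P] [NormedAddCommGroup E] [NormedSpace ℝ E] [CompleteSpace E]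
    (hm : m ≤ mΩ) {f : Ω → ℝ} {g : Ω → E} (hf : AEStronglyMeasurable[m] f P)
    (hfg : Integrable (f • g) P) (hg : Integrable g P) :
    ∫ ω, f ω • (P[g|m]) ω ∂P = ∫ ω, f ω • g ω ∂P :=
  calc ∫ ω, f ω • (P[g|m]) ω ∂P = ∫ ω, (P[f • g|m]) ω ∂P :=
        integral_congr_ae (condExp_smul_of_aestronglyMeasurable_left hf hfg hg).symm
    _ = ∫ ω, f ω • g ω ∂P := integral_condExp hm

end MeasureTheory

theorem ProbabilityTheory.iIndepFun.integral_comp_eq_integral_pi {Ω ι β F : Type*}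
    [Fintype ι] {mΩ : MeasurableSpace Ω} {P : Measure Ω} [MeasurableSpace β]
    [NormedAddCommGroup F] [NormedSpace ℝ F] {Z : ι → Ω → β} (hindep : iIndepFun Z P)
    (hZ : ∀ i, Measurable (Z i)) {μ : Measure β} [SigmaFinite μ] (hlaw : ∀ i, P.map (Z i) = μ)
    {G : (ι → β) → F} (hG : AEStronglyMeasurable G (Measure.pi fun _ => μ)) :
    ∫ ω, G (fun i => Z i ω) ∂P = ∫ v, G v ∂Measure.pi fun _ => μ := by
  have hpi : P.map (fun ω i => Z i ω) = Measure.pi fun _ => μ := by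
    rw [hindep.map_fun_eq_pi_map fun i => (hZ i).aemeasurable]
    simp_rw [hlaw]
  rw [← hpi] at hG ⊢
  exact (integral_map (measurable_pi_lambda _ hZ).aemeasurable hG).symm

section HonestWeights

open Set Function
open scoped InnerProductSpace

theorem mem_Icc_of_sum_eq_one {ι : Type*} [Fintype ι] {w : ι → ℝ} (hw0 : ∀ i, 0 ≤ w i)
    (hw : ∑ i, w i = 1) (i : ι) : w i ∈ Icc 0 1 :=
  ⟨hw0 i, hw ▸ Finset.single_le_sum (fun j _ => hw0 j) (Finset.mem_univ i)⟩

theorem norm_smul_le_of_mem_Icc {E : Type*} [NormedAddCommGroup E] [NormedSpace ℝ E] {t : ℝ}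
    {x : E} {C : ℝ} (ht : t ∈ Icc 0 1) (hx : ‖x‖ ≤ C) : ‖t • x‖ ≤ C := by
  rw [norm_smul, Real.norm_of_nonneg ht.1]
  exact (mul_le_of_le_one_left (norm_nonneg _) ht.2).trans hx

theorem norm_le_one_of_mem_Icc {t : ℝ} (ht : t ∈ Icc 0 1) : ‖t‖ ≤ 1 := by
  simpa using norm_smul_le_of_mem_Icc (x := (1 : ℝ)) ht norm_one.le

variable {ι 𝓧 𝓞 E : Type*} [Fintype ι] [MeasurableSpace 𝓧] [MeasurableSpace 𝓞]
  [NormedAddCommGroup E]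

/-- The weak form of `E[D | X] = 0` for `(X, O) ∼ μ`: `D` is orthogonal to every
`[0,1]`-valued function of the first coordinate. -/
def HasCondMeanZeroGivenFst [NormedSpace ℝ E] (μ : Measure (𝓧 × 𝓞)) (D : 𝓧 × 𝓞 → E) :
    Prop :=
  ∀ f : 𝓧 → ℝ, Measurable f → (∀ x, f x ∈ Icc 0 1) → ∫ p, f p.1 • D p ∂μ = 0

/-- The weak form of `E[‖D‖² | X] ≤ V` for `(X, O) ∼ μ`. -/
def CondSecondMomentGivenFstLE (μ : Measure (𝓧 × 𝓞)) (D : 𝓧 × 𝓞 → E) (V : ℝ) : Prop :=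
  ∀ f : 𝓧 → ℝ, Measurable f → (∀ x, f x ∈ Icc 0 1) →
    ∫ p, f p.1 * ‖D p‖ ^ 2 ∂μ ≤ V * ∫ p, f p.1 ∂μ

section ConditionalMoments

variable {Ω : Type*} {mΩ : MeasurableSpace Ω} {P : Measure Ω} [IsFiniteMeasure P]
  {Y : Ω → 𝓧} {Z : Ω → 𝓞}

theorem hasCondMeanZeroGivenFst_map [NormedSpace ℝ E] [CompleteSpace E] (hY : Measurable Y)
    (hZ : Measurable Z) {ψ : 𝓞 → E} (hψ : StronglyMeasurable ψ)
    (hψZ : Integrable (fun ω => ψ (Z ω)) P) {M : 𝓧 → E} (hM : StronglyMeasurable M)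
    (hMcond : (fun ω => M (Y ω))
      =ᵐ[P] P[fun ω => ψ (Z ω)|MeasurableSpace.comap Y inferInstance]) :
    HasCondMeanZeroGivenFst (P.map fun ω => (Y ω, Z ω)) fun p => ψ p.2 - M p.1 := by
  intro f hf hf01
  have hg : AEStronglyMeasurable (fun p : 𝓧 × 𝓞 => f p.1 • (ψ p.2 - M p.1))
      (P.map fun ω => (Y ω, Z ω)) :=
    ((hf.comp measurable_fst).stronglyMeasurable.smul ((hψ.comp_measurable measurable_snd).sub
      (hM.comp_measurable measurable_fst))).aestronglyMeasurable
  beta_reduce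
  rw [integral_map (hY.prodMk hZ).aemeasurable hg]
  have hbdd : ∀ᵐ ω ∂P, ‖f (Y ω)‖ ≤ 1 := ae_of_all _ fun _ => norm_le_one_of_mem_Icc (hf01 _)
  have hfψ : Integrable (fun ω => f (Y ω) • ψ (Z ω)) P :=
    hψZ.bdd_smul 1 (hf.comp hY).aestronglyMeasurable hbdd
  have hfM : Integrable (fun ω => f (Y ω) • M (Y ω)) P :=
    (integrable_condExp.congr hMcond.symm).bdd_smul 1 (hf.comp hY).aestronglyMeasurable hbdd
  have hfM_eq : ∫ ω, f (Y ω) • M (Y ω) ∂P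
      = ∫ ω, f (Y ω) • (P[fun ω => ψ (Z ω)|MeasurableSpace.comap Y inferInstance]) ω ∂P :=
    integral_congr_ae (by filter_upwards [hMcond] with ω hω; rw [hω])
  have hfY : AEStronglyMeasurable[MeasurableSpace.comap Y inferInstance] (fun ω => f (Y ω)) P :=
    (hf.comp (comap_measurable Y)).aestronglyMeasurable
  simp_rw [smul_sub]
  rw [integral_sub hfψ hfM, hfM_eq, integral_smul_condExp hY.comap_le hfY hfψ hψZ, sub_self]

theorem condSecondMomentGivenFstLE_map (hY : Measurable Y) (hZ : Measurable Z)
    {D : 𝓧 × 𝓞 → E} (hD : StronglyMeasurable D)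
    (hDZ : Integrable (fun ω => ‖D (Y ω, Z ω)‖ ^ 2) P) {V : ℝ}
    (hV : ∀ᵐ ω ∂P,
      (P[fun ω => ‖D (Y ω, Z ω)‖ ^ 2|MeasurableSpace.comap Y inferInstance]) ω ≤ V) :
    CondSecondMomentGivenFstLE (P.map fun ω => (Y ω, Z ω)) D V := by
  intro f hf hf01
  have hYZ := (hY.prodMk hZ).aemeasurable (μ := P)
  have hg : AEStronglyMeasurable (fun p : 𝓧 × 𝓞 => f p.1 * ‖D p‖ ^ 2)
      (P.map fun ω => (Y ω, Z ω)) :=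
    ((hf.comp measurable_fst).stronglyMeasurable.mul (hD.norm.pow 2)).aestronglyMeasurable
  rw [integral_map hYZ hg,
    integral_map hYZ (by fun_prop : Measurable fun p : 𝓧 × 𝓞 => f p.1).aestronglyMeasurable]
  have hbdd : ∀ᵐ ω ∂P, ‖f (Y ω)‖ ≤ 1 := ae_of_all _ fun _ => norm_le_one_of_mem_Icc (hf01 _)
  have hfY : Integrable (fun ω => f (Y ω)) P := .of_bound (hf.comp hY).aestronglyMeasurable 1 hbdd
  calc ∫ ω, f (Y ω) * ‖D (Y ω, Z ω)‖ ^ 2 ∂P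
      = ∫ ω, f (Y ω) *
          (P[fun ω => ‖D (Y ω, Z ω)‖ ^ 2|MeasurableSpace.comap Y inferInstance]) ω ∂P :=
        (integral_smul_condExp hY.comap_le (hf.comp (comap_measurable Y)).aestronglyMeasurable
          (hDZ.bdd_mul (hf.comp hY).aestronglyMeasurable hbdd) hDZ).symm
    _ ≤ ∫ ω, f (Y ω) * V ∂P :=
        integral_mono_ae (integrable_condExp.bdd_mul (hf.comp hY).aestronglyMeasurable hbdd)
          (hfY.mul_const V) (by filter_upwards [hV] with ω hω using
            mul_le_mul_of_nonneg_left hω (hf01 _).1)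
    _ = V * ∫ ω, f (Y ω) ∂P := by rw [integral_mul_const, mul_comm]

end ConditionalMoments

variable {μ : Measure (𝓧 × 𝓞)} [IsProbabilityMeasure μ] {D : 𝓧 × 𝓞 → E} {C : ℝ}
  {a : (ι → 𝓧) → ℝ} {α : ι → (ι → 𝓧) → ℝ}

theorem integrable_weight (ha : Measurable a) (ha01 : ∀ x, a x ∈ Icc 0 1) :
    Integrable (fun v : ι → 𝓧 × 𝓞 => a (Prod.fst ∘ v)) (Measure.pi fun _ => μ) :=
  .of_bound (by fun_prop : Measurable _).aestronglyMeasurable 1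
    (ae_of_all _ fun _ => norm_le_one_of_mem_Icc (ha01 _))

theorem integrable_weight_smul [NormedSpace ℝ E] (hD : StronglyMeasurable D)
    (hDC : ∀ p, ‖D p‖ ≤ C) (ha : Measurable a) (ha01 : ∀ x, a x ∈ Icc 0 1) (i : ι) :
    Integrable (fun v : ι → 𝓧 × 𝓞 => a (Prod.fst ∘ v) • D (v i)) (Measure.pi fun _ => μ) := by
  have ha' : Measurable fun v : ι → 𝓧 × 𝓞 => a (Prod.fst ∘ v) := by fun_prop
  exact .of_bound (ha'.stronglyMeasurable.smul
    (hD.comp_measurable (measurable_pi_apply i))).aestronglyMeasurable C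
    (ae_of_all _ fun v => norm_smul_le_of_mem_Icc (ha01 _) (hDC _))

theorem integral_weight_smul_eq_zero [NormedSpace ℝ E] (hD : StronglyMeasurable D)
    (hDC : ∀ p, ‖D p‖ ≤ C) (hcentered : HasCondMeanZeroGivenFst μ D) (ha : Measurable a)
    (ha01 : ∀ x, a x ∈ Icc 0 1) (i : ι) :
    ∫ v, a (Prod.fst ∘ v) • D (v i) ∂Measure.pi (fun _ => μ) = 0 := by
  classical
  rw [integral_pi_eq_integral_integral_update _ i (integrable_weight_smul hD hDC ha ha01 i)]
  have hsection (v : ι → 𝓧 × 𝓞) :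
      ∫ y, a (Prod.fst ∘ update v i y) • D (update v i y i) ∂μ = 0 := by
    simpa only [comp_update, update_self] using
      hcentered (fun x => a (update (Prod.fst ∘ v) i x)) (ha.comp (measurable_update _))
        fun _ => ha01 _
  simp only [hsection, integral_zero]

theorem integral_weighted_sum_eq_zero [NormedSpace ℝ E] (hD : StronglyMeasurable D)
    (hDC : ∀ p, ‖D p‖ ≤ C) (hcentered : HasCondMeanZeroGivenFst μ D)
    (hα : ∀ i, Measurable (α i)) (hα0 : ∀ i x, 0 ≤ α i x) (hαsum : ∀ x, ∑ i, α i x = 1) :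
    ∫ v, ∑ i, α i (Prod.fst ∘ v) • D (v i) ∂Measure.pi (fun _ => μ) = 0 := by
  have hα01 (i : ι) (x : ι → 𝓧) := mem_Icc_of_sum_eq_one (hα0 · x) (hαsum x) i
  rw [integral_finsetSum _ fun i _ => integrable_weight_smul hD hDC (hα i) (hα01 i) i]
  exact Finset.sum_eq_zero fun i _ =>
    integral_weight_smul_eq_zero hD hDC hcentered (hα i) (hα01 i) i

variable [InnerProductSpace ℝ E]

theorem integrable_weight_mul_inner (hD : StronglyMeasurable D) (hDC : ∀ p, ‖D p‖ ≤ C)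
    (ha : Measurable a) (ha01 : ∀ x, a x ∈ Icc 0 1) (i j : ι) :
    Integrable (fun v : ι → 𝓧 × 𝓞 => a (Prod.fst ∘ v) * ⟪D (v i), D (v j)⟫_ℝ)
      (Measure.pi fun _ => μ) := by
  have ha' : Measurable fun v : ι → 𝓧 × 𝓞 => a (Prod.fst ∘ v) := by fun_prop
  have hinner (v : ι → 𝓧 × 𝓞) : ‖⟪D (v i), D (v j)⟫_ℝ‖ ≤ C * C :=
    (norm_inner_le_norm _ _).trans
      (mul_le_mul (hDC _) (hDC _) (norm_nonneg _) ((norm_nonneg (D (v i))).trans (hDC _)))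
  exact .of_bound (ha'.stronglyMeasurable.mul
    ((hD.comp_measurable (measurable_pi_apply i)).inner
      (hD.comp_measurable (measurable_pi_apply j)))).aestronglyMeasurable (C * C)
    (ae_of_all _ fun v => norm_smul_le_of_mem_Icc (ha01 _) (hinner v))

theorem integral_weight_mul_inner_eq_zero [CompleteSpace E] (hD : StronglyMeasurable D)
    (hDC : ∀ p, ‖D p‖ ≤ C) (hcentered : HasCondMeanZeroGivenFst μ D) (ha : Measurable a)
    (ha01 : ∀ x, a x ∈ Icc 0 1) {i j : ι} (hij : i ≠ j) :
    ∫ v, a (Prod.fst ∘ v) * ⟪D (v i), D (v j)⟫_ℝ ∂Measure.pi (fun _ => μ) = 0 := by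
  classical
  rw [integral_pi_eq_integral_integral_update _ i
    (integrable_weight_mul_inner hD hDC ha ha01 i j)]
  have hsection (v : ι → 𝓧 × 𝓞) : ∫ y, a (Prod.fst ∘ update v i y) *
      ⟪D (update v i y i), D (update v i y j)⟫_ℝ ∂μ = 0 := by
    set f : 𝓧 → ℝ := fun x => a (update (Prod.fst ∘ v) i x)
    have hf : Measurable f := ha.comp (measurable_update _)
    have hint : Integrable (fun p : 𝓧 × 𝓞 => f p.1 • D p) μ :=
      .of_bound ((hf.comp measurable_fst).stronglyMeasurable.smul hD).aestronglyMeasurable C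
        (ae_of_all _ fun p => norm_smul_le_of_mem_Icc (ha01 _) (hDC _))
    have h := integral_inner (𝕜 := ℝ) hint (D (v j))
    rw [hcentered f hf (fun _ => ha01 _), inner_zero_right] at h
    simpa only [comp_update, update_self, update_of_ne hij.symm, real_inner_smul_right,
      real_inner_comm (D (v j))] using h
  simp only [hsection, integral_zero]

theorem integral_weight_mul_norm_sq_le (hD : StronglyMeasurable D) (hDC : ∀ p, ‖D p‖ ≤ C)
    {V : ℝ} (hmoment : CondSecondMomentGivenFstLE μ D V) (ha : Measurable a)
    (ha01 : ∀ x, a x ∈ Icc 0 1) (i : ι) :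
    ∫ v, a (Prod.fst ∘ v) * ‖D (v i)‖ ^ 2 ∂Measure.pi (fun _ => μ)
      ≤ V * ∫ v, a (Prod.fst ∘ v) ∂Measure.pi (fun _ => μ) := by
  classical
  have hint := integrable_weight_mul_inner (μ := μ) hD hDC ha ha01 i i
  simp only [real_inner_self_eq_norm_sq] at hint
  have hint' := integrable_weight (μ := μ) ha ha01
  rw [integral_pi_eq_integral_integral_update (fun _ => μ) i hint,
    integral_pi_eq_integral_integral_update (fun _ => μ) i hint', ← integral_const_mul]
  refine integral_mono (hint.integral_update (fun _ => μ) i)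
    ((hint'.integral_update (fun _ => μ) i).const_mul V) fun v => ?_
  simpa only [comp_update, update_self] using
    hmoment (fun x => a (update (Prod.fst ∘ v) i x)) (ha.comp (measurable_update _))
      fun _ => ha01 _

theorem integral_norm_weighted_sum_sq_le [CompleteSpace E] (hD : StronglyMeasurable D)
    (hDC : ∀ p, ‖D p‖ ≤ C) (hcentered : HasCondMeanZeroGivenFst μ D) {V : ℝ} (hV : 0 ≤ V)
    (hmoment : CondSecondMomentGivenFstLE μ D V) (hα : ∀ i, Measurable (α i))
    (hα0 : ∀ i x, 0 ≤ α i x) (hαsum : ∀ x, ∑ i, α i x = 1) :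
    ∫ v, ‖∑ i, α i (Prod.fst ∘ v) • D (v i)‖ ^ 2 ∂Measure.pi (fun _ => μ) ≤ V := by
  have hα01 (i : ι) (x : ι → 𝓧) := mem_Icc_of_sum_eq_one (hα0 · x) (hαsum x) i
  have hαα (i j : ι) (x : ι → 𝓧) : α i x * α j x ∈ Icc 0 1 :=
    ⟨mul_nonneg (hα0 i x) (hα0 j x), mul_le_one₀ (hα01 i x).2 (hα0 j x) (hα01 j x).2⟩
  have hαα_meas (i j : ι) : Measurable fun x => α i x * α j x := (hα i).mul (hα j)
  have hint (i j : ι) :=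
    integrable_weight_mul_inner (μ := μ) hD hDC (hαα_meas i j) (hαα i j) i j
  have hint_sq (i : ι) := integrable_weight (μ := μ) (hαα_meas i i) (hαα i i)
  have hsum_sq_le (x : ι → 𝓧) : ∑ i, α i x * α i x ≤ 1 :=
    hαsum x ▸ Finset.sum_le_sum fun i _ => mul_le_of_le_one_left (hα0 i x) (hα01 i x).2
  have hexpand (v : ι → 𝓧 × 𝓞) : ‖∑ i, α i (Prod.fst ∘ v) • D (v i)‖ ^ 2
      = ∑ i, ∑ j, α i (Prod.fst ∘ v) * α j (Prod.fst ∘ v) * ⟪D (v i), D (v j)⟫_ℝ := by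
    rw [← real_inner_self_eq_norm_sq, sum_inner]
    refine Finset.sum_congr rfl fun i _ => ?_
    rw [inner_sum]
    refine Finset.sum_congr rfl fun j _ => ?_
    rw [real_inner_smul_left, real_inner_smul_right, mul_assoc]
  calc ∫ v, ‖∑ i, α i (Prod.fst ∘ v) • D (v i)‖ ^ 2 ∂Measure.pi (fun _ => μ)
      = ∑ i, ∑ j, ∫ v, α i (Prod.fst ∘ v) * α j (Prod.fst ∘ v) * ⟪D (v i), D (v j)⟫_ℝ
          ∂Measure.pi (fun _ => μ) := by
        simp_rw [hexpand]
        rw [integral_finsetSum _ fun i _ => integrable_finsetSum _ fun j _ => hint i j]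
        exact Finset.sum_congr rfl fun i _ => integral_finsetSum _ fun j _ => hint i j
    _ = ∑ i, ∫ v, α i (Prod.fst ∘ v) * α i (Prod.fst ∘ v) * ‖D (v i)‖ ^ 2
          ∂Measure.pi (fun _ => μ) := by
        refine Finset.sum_congr rfl fun i _ => ?_
        rw [Finset.sum_eq_single i (fun j _ hji => integral_weight_mul_inner_eq_zero hD hDC
          hcentered (hαα_meas i j) (hαα i j) hji.symm) (by simp)]
        simp_rw [real_inner_self_eq_norm_sq]
    _ ≤ ∑ i, V * ∫ v, α i (Prod.fst ∘ v) * α i (Prod.fst ∘ v) ∂Measure.pi (fun _ => μ) :=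
        Finset.sum_le_sum fun i _ =>
          integral_weight_mul_norm_sq_le hD hDC hmoment (hαα_meas i i) (hαα i i) i
    _ = V * ∫ v, ∑ i, α i (Prod.fst ∘ v) * α i (Prod.fst ∘ v) ∂Measure.pi (fun _ => μ) := by
        rw [← Finset.mul_sum, integral_finsetSum _ fun i _ => hint_sq i]
    _ ≤ V * 1 := by
        gcongr
        exact (integral_mono (integrable_finsetSum _ fun i _ => hint_sq i)
          (integrable_const 1) fun v => hsum_sq_le _).trans_eq (by simp)
    _ = V := mul_one V

end HonestWeights

/-- honest forest weights: the weighted sum of centered scores has mean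
zero, and its second moment is controlled by the worst-case conditional second moment of
the centered score. -/
theorem honest_weights_centered_score_bound
    {𝓧 𝓞 : Type*} [MeasurableSpace 𝓧] [MeasurableSpace 𝓞]
    {Ω : Type*} [MeasurableSpace Ω] (P : Measure Ω) [IsProbabilityMeasure P]
    (n k : ℕ) (hn : 1 ≤ n)
    (X : Fin n → Ω → 𝓧) (O : Fin n → Ω → 𝓞)
    (hmeas : ∀ i, Measurable (fun ω => (X i ω, O i ω)))
    (hindep : iIndepFun (fun i ω => (X i ω, O i ω)) P)
    (hident : ∀ i j, Measure.map (fun ω => (X i ω, O i ω)) P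
        = Measure.map (fun ω => (X j ω, O j ω)) P)
    (ψ : 𝓞 → EuclideanSpace ℝ (Fin k)) (hψmeas : Measurable ψ)
    (Cψ : ℝ) (hψbdd : ∀ o, ‖ψ o‖ ≤ Cψ)
    (M : 𝓧 → EuclideanSpace ℝ (Fin k)) (hMmeas : Measurable M)
    (CM : ℝ) (hMbdd : ∀ x, ‖M x‖ ≤ CM)
    (hM : (fun ω => M (X ⟨0, hn⟩ ω)) =ᵐ[P]
        P[(fun ω => ψ (O ⟨0, hn⟩ ω)) |
          MeasurableSpace.comap (X ⟨0, hn⟩) inferInstance])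
    (α : Fin n → (Fin n → 𝓧) → ℝ)
    (hαmeas : ∀ i, Measurable (α i))
    (hαnn : ∀ i v, 0 ≤ α i v)
    (hαsum : ∀ v, ∑ i, α i v = 1) :
    (∫ ω, (∑ i, α i (fun j => X j ω) • (ψ (O i ω) - M (X i ω))) ∂P) = 0
      ∧ ∀ V : ℝ, 0 ≤ V →
          (∀ᵐ ω ∂P,
            (P[(fun ω' => ‖ψ (O ⟨0, hn⟩ ω') - M (X ⟨0, hn⟩ ω')‖ ^ 2) |
              MeasurableSpace.comap (X ⟨0, hn⟩) inferInstance]) ω ≤ V) →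
          (∫ ω, ‖∑ i, α i (fun j => X j ω) • (ψ (O i ω) - M (X i ω))‖ ^ 2 ∂P) ≤ V := by
  set i0 : Fin n := ⟨0, hn⟩
  set μ := P.map fun ω => (X i0 ω, O i0 ω)
  have : IsProbabilityMeasure μ := Measure.isProbabilityMeasure_map (hmeas i0).aemeasurable
  have hlaw (i : Fin n) : P.map (fun ω => (X i ω, O i ω)) = μ := hident i i0
  set D : 𝓧 × 𝓞 → EuclideanSpace ℝ (Fin k) := fun p => ψ p.2 - M p.1
  have hD : Measurable D := (hψmeas.comp measurable_snd).sub (hMmeas.comp measurable_fst)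
  have hDC (p : 𝓧 × 𝓞) : ‖D p‖ ≤ Cψ + CM :=
    (norm_sub_le _ _).trans (add_le_add (hψbdd _) (hMbdd _))
  have hcentered : HasCondMeanZeroGivenFst μ D :=
    hasCondMeanZeroGivenFst_map (hmeas i0).fst (hmeas i0).snd hψmeas.stronglyMeasurable
      (.of_bound (hψmeas.comp (hmeas i0).snd).aestronglyMeasurable Cψ
        (ae_of_all _ fun _ => hψbdd _)) hMmeas.stronglyMeasurable hM
  refine ⟨?_, fun V hV hVb => ?_⟩
  · exact (hindep.integral_comp_eq_integral_pi hmeas hlaw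
      (G := fun v => ∑ i, α i (Prod.fst ∘ v) • D (v i)) (by fun_prop)).trans
      (integral_weighted_sum_eq_zero hD.stronglyMeasurable hDC hcentered hαmeas hαnn hαsum)
  · have hDsq : Integrable (fun ω => ‖D (X i0 ω, O i0 ω)‖ ^ 2) P :=
      .of_bound ((hD.comp (hmeas i0)).norm.pow_const 2).aestronglyMeasurable ((Cψ + CM) ^ 2)
        (ae_of_all _ fun _ => by
          rw [Real.norm_of_nonneg (by positivity)]
          exact pow_le_pow_left₀ (norm_nonneg _) (hDC _) 2)
    have hmoment : CondSecondMomentGivenFstLE μ D V :=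
      condSecondMomentGivenFstLE_map (hmeas i0).fst (hmeas i0).snd hD.stronglyMeasurable hDsq hVb
    exact (hindep.integral_comp_eq_integral_pi hmeas hlaw
      (G := fun v => ‖∑ i, α i (Prod.fst ∘ v) • D (v i)‖ ^ 2) (by fun_prop)).trans_le
      (integral_norm_weighted_sum_sq_le hD.stronglyMeasurable hDC hcentered hV hmoment hαmeas
        hαnn hαsum)
end

section
/- Let n ≥ s ≥ 1, set k := ⌊n/s⌋, let E be a set, let x₁, …, xₙ ∈ E, and let h : Eˢ → ℝ be any function. Then (n!/(n−s)!)⁻¹ Σ_{ι} h(x_{ι(1)}, …, x_{ι(s)}) = (n!)⁻¹ Σ_{σ} k⁻¹ Σ_{j=1}^{k} h(x_{σ((j−1)s+1)}, …, x_{σ(js)}), where the first sum ranges over all injections ι : {1, …, s} → {1, …, n} and the second sum ranges over all permutations σ of {1, …, n}. -/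
/-!
Since `Equiv.Perm (Fin n)` acts transitively on the injections `Fin s ↪ Fin n`, averaging a
function of `σ • ι` over all permutations `σ` gives its average over all injections, whatever the
injection `ι`. Each of the `⌊n/s⌋` disjoint blocks `i ↦ j * s + i` is such an injection, so every
block term on the right averages to the U-statistic on the left.
-/

open Finset

namespace MulAction

variable {G X : Type*} [Group G] [Fintype G] [MulAction G X] [Fintype X] [IsPretransitive G X]

/-- Orbit averaging: both sides equal `∑ y, ∑ g, f (g • y)`. -/
theorem card_nsmul_sum_smul_eq {M : Type*} [AddCommMonoid M] (f : X → M) (x : X) :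
    Fintype.card X • ∑ g : G, f (g • x) = Fintype.card G • ∑ y, f y := by
  have sum_smul_indep : ∀ y : X, ∑ g : G, f (g • y) = ∑ g : G, f (g • x) := by
    intro y
    obtain ⟨τ, rfl⟩ := exists_smul_eq G x y
    simp_rw [smul_smul]
    exact Fintype.sum_equiv (Equiv.mulRight τ) _ _ fun _ => rfl
  calc Fintype.card X • ∑ g : G, f (g • x)
      = ∑ y : X, ∑ g : G, f (g • y) := by simp [sum_smul_indep]
    _ = ∑ g : G, ∑ y, f (g • y) := sum_comm
    _ = ∑ g : G, ∑ y, f y := sum_congr rfl fun g _ => Equiv.sum_comp (toPerm g) f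
    _ = Fintype.card G • ∑ y, f y := by simp

theorem inv_card_mul_sum_smul_eq {𝕜 : Type*} [Field 𝕜] [CharZero 𝕜] (f : X → 𝕜) (x : X) :
    (Fintype.card G : 𝕜)⁻¹ * ∑ g : G, f (g • x) = (Fintype.card X : 𝕜)⁻¹ * ∑ y, f y := by
  have hX : (Fintype.card X : 𝕜) ≠ 0 := Nat.cast_ne_zero.mpr (Fintype.card_pos_iff.mpr ⟨x⟩).ne'
  have hG : (Fintype.card G : 𝕜) ≠ 0 := by simp
  have key := card_nsmul_sum_smul_eq (G := G) f x
  simp only [nsmul_eq_mul] at key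
  field_simp
  linear_combination key

end MulAction

def Fin.blockEmbedding {n s k : ℕ} (hks : k * s ≤ n) (j : Fin k) : Fin s ↪ Fin n where
  toFun i := ⟨j * s + i, by nlinarith [j.isLt, i.isLt]⟩
  inj' _ _ hij := Fin.ext (Nat.add_left_cancel (Fin.val_eq_of_eq hij))

/-- Hoeffding's representation of a U-statistic of order `s` from `n`
observations as an average, over all permutations of the sample, of means of `⌊n/s⌋`
kernel evaluations on disjoint blocks. -/
theorem u_statistic_hoeffding_representation
    {E : Type*} (n s k : ℕ) (hs : 1 ≤ s) (hsn : s ≤ n) (hk : k = n / s)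
    (x : Fin n → E) (h : (Fin s → E) → ℝ) :
    ((n.factorial : ℝ) / ((n - s).factorial : ℝ))⁻¹ *
        ∑ ι : Fin s ↪ Fin n, h (fun j => x (ι j))
      = ((n.factorial : ℝ))⁻¹ *
          ∑ σ : Equiv.Perm (Fin n), (k : ℝ)⁻¹ *
            ∑ j : Fin k, h (fun i => x (σ ⟨j.val * s + i.val, by
              have h1 : (j.val + 1) * s ≤ k * s := Nat.mul_le_mul_right s j.isLt
              have h2 : k * s ≤ n := by rw [hk]; exact Nat.div_mul_le_self n s
              calc j.val * s + i.val < j.val * s + s := Nat.add_lt_add_left i.isLt _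
                _ = (j.val + 1) * s := (Nat.succ_mul j.val s).symm
                _ ≤ n := le_trans h1 h2⟩)) := by
  have hks : k * s ≤ n := hk ▸ Nat.div_mul_le_self n s
  have hk0 : (k : ℝ) ≠ 0 := Nat.cast_ne_zero.mpr (hk ▸ Nat.div_pos hsn hs).ne'
  have card_embedding : (n.factorial : ℝ) / (n - s).factorial = Fintype.card (Fin s ↪ Fin n) := by
    rw [Fintype.card_embedding_eq, Fintype.card_fin, Fintype.card_fin,
      ← Nat.factorial_mul_descFactorial hsn]
    push_cast
    field_simp
  have := Equiv.Perm.isMultiplyPretransitive (Fin n) s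
  set U : (Fin s ↪ Fin n) → ℝ := fun ι => h (fun i => x (ι i))
  have block_average : ∀ j : Fin k,
      (n.factorial : ℝ)⁻¹ * ∑ σ : Equiv.Perm (Fin n), U (σ • Fin.blockEmbedding hks j)
        = (Fintype.card (Fin s ↪ Fin n) : ℝ)⁻¹ * ∑ ι, U ι := fun j => by
    simpa [Fintype.card_perm] using
      MulAction.inv_card_mul_sum_smul_eq (G := Equiv.Perm (Fin n)) U (Fin.blockEmbedding hks j)
  calc _ = (k : ℝ)⁻¹ * ∑ j : Fin k, (Fintype.card (Fin s ↪ Fin n) : ℝ)⁻¹ * ∑ ι, U ι := by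
        rw [sum_const, card_univ, Fintype.card_fin, nsmul_eq_mul, card_embedding]
        field_simp
    _ = (k : ℝ)⁻¹ * ∑ j : Fin k, (n.factorial : ℝ)⁻¹ *
        ∑ σ : Equiv.Perm (Fin n), U (σ • Fin.blockEmbedding hks j) := by
        simp_rw [block_average]
    _ = _ := by
        simp only [mul_sum]
        rw [sum_comm]
        -- `U (σ • Fin.blockEmbedding hks j)` unfolds to the block term of the statement.
        exact sum_congr rfl fun σ _ => sum_congr rfl fun j _ => mul_left_comm _ _ _
end
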